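/- arXiv:2302.13312 — 3 statements merged into one kernel-verified Lean document; each statement's English description precedes it below -/
import Mathlib

section
/- Let G be a simple graph, and let uv be an edge of G with d_G(u) + d_G(v) ≤ 10. If the edges of G - uv can be partitioned into four linear forests and a matching, then the edges of G can be partitioned into four linear forests and a matching. -/
/-- The colour class `i` of an edge-colouring `c` of the graph `G`:
the spanning subgraph whose edges are the edges of `G` coloured `i`. -/
def colorClass {V : Type*} (G : SimpleGraph V) {k : ℕ} (c : Sym2 V → Fin k) (i : Fin k) :
    SimpleGraph V where
  Adj a b := G.Adj a b ∧ c s(a, b) = i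
  symm := ⟨fun a b ⟨h, hc⟩ => ⟨h.symm, by rwa [Sym2.eq_swap]⟩⟩
  loopless := ⟨fun a ⟨h, _⟩ => G.loopless.irrefl a h⟩

/-- A linear forest: an acyclic graph of maximum degree at most `2`,
equivalently a forest every connected component of which is a path. -/
def IsLinearForest {V : Type*} (H : SimpleGraph V) : Prop :=
  H.IsAcyclic ∧ ∀ v, (H.neighborSet v).ncard ≤ 2

/-- A matching (as a graph): every vertex has at most one neighbour,
i.e. the edges are pairwise non-adjacent. -/
def IsMatchingGraph {V : Type*} (H : SimpleGraph V) : Prop :=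
  ∀ v, (H.neighborSet v).ncard ≤ 1

/-- `G` has a partition of its edge set into `k` linear forests and one matching:
colour `0` is the matching, colours `1,…,k` are the linear forests. -/
def HasPartitionLFM {V : Type*} (G : SimpleGraph V) (k : ℕ) : Prop :=
  ∃ c : Sym2 V → Fin (k + 1), IsMatchingGraph (colorClass G c 0) ∧
    ∀ i : Fin (k + 1), i ≠ 0 → IsLinearForest (colorClass G c i)

/-!
Colour `G - uv` and write `dᵢ(x)` for the number of edges of colour `i` at `x`. If some forest
colour `i` has `dᵢ(u) + dᵢ(v) ≤ 1`, give `uv` colour `i`: one endpoint has no edge of colour `i`,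
so `uv` joins two components of that forest and every degree stays at most `2`. Otherwise each
of the four forest colours accounts for two of the at most `8` edges of `G - uv` at `u` and `v`,
so no matching edge meets `u` or `v` and `uv` can join the matching.
-/

open SimpleGraph

section

variable {V : Type*} {G H : SimpleGraph V} {u v w : V}

namespace SimpleGraph

lemma not_reachable_of_neighborSet_eq_empty (huv : u ≠ v) (hv : H.neighborSet v = ∅) :
    ¬H.Reachable u v := by
  rintro ⟨p⟩
  have hadj : H.Adj v p.penultimate := (p.adj_penultimate (Walk.not_nil_of_ne huv)).symm
  simp [← mem_neighborSet, hv] at hadj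

lemma neighborSet_sup_edge_of_ne (hwu : w ≠ u) (hwv : w ≠ v) :
    (H ⊔ edge u v).neighborSet w = H.neighborSet w := by
  ext x
  simp [edge_adj, hwu, hwv]

lemma isMatchingGraph_edge (u v : V) : IsMatchingGraph (edge u v) := by
  intro w
  have hsub : (edge u v).neighborSet w ⊆ {u, v} := by
    intro x hx
    simp only [mem_neighborSet, edge_adj] at hx
    grind
  rw [Set.ncard_le_one ((Set.toFinite _).subset hsub)]
  intro a ha b hb
  simp only [mem_neighborSet, edge_adj] at ha hb
  grind

lemma ncard_neighborSet_sup_edge_le (u v w : V) :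
    ((H ⊔ edge u v).neighborSet w).ncard ≤ (H.neighborSet w).ncard + 1 :=
  (Set.ncard_union_le _ _).trans (Nat.add_le_add_left (isMatchingGraph_edge u v w) _)

lemma ncard_neighborSet_deleteEdges_add_one [Fintype V] [DecidableRel H.Adj] (huv : H.Adj u v) :
    ((H.deleteEdges {s(u, v)}).neighborSet u).ncard + 1 = H.degree u := by
  have hdel : (H.deleteEdges {s(u, v)}).neighborSet u = H.neighborSet u \ {v} := by
    ext x
    simp only [mem_neighborSet, deleteEdges_adj, Set.mem_singleton_iff, Sym2.congr_right,
      Set.mem_sdiff]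
  rw [hdel, Set.ncard_sdiff_singleton_add_one (show v ∈ H.neighborSet u from huv),
    ← Nat.card_coe_set_eq, Nat.card_eq_fintype_card, card_neighborSet_eq_degree]

end SimpleGraph

lemma IsMatchingGraph.sup_edge (hH : IsMatchingGraph H)
    (hu : H.neighborSet u = ∅) (hv : H.neighborSet v = ∅) : IsMatchingGraph (H ⊔ edge u v) := by
  intro w
  by_cases! hw : w = u ∨ w = v
  · have hw0 : H.neighborSet w = ∅ := by rcases hw with rfl | rfl <;> assumption
    simpa [hw0] using ncard_neighborSet_sup_edge_le (H := H) u v w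
  · rw [neighborSet_sup_edge_of_ne hw.1 hw.2]
    exact hH w

lemma IsLinearForest.sup_edge (hH : IsLinearForest H) (huv : u ≠ v)
    (hu : (H.neighborSet u).ncard ≤ 1) (hv : H.neighborSet v = ∅) :
    IsLinearForest (H ⊔ edge u v) := by
  refine ⟨hH.1.sup_edge_of_not_reachable (not_reachable_of_neighborSet_eq_empty huv hv), ?_⟩
  intro w
  by_cases! hw : w = u ∨ w = v
  · have hw1 : (H.neighborSet w).ncard ≤ 1 := by rcases hw with rfl | rfl <;> simp [hu, hv]
    exact (ncard_neighborSet_sup_edge_le u v w).trans (by omega)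
  · rw [neighborSet_sup_edge_of_ne hw.1 hw.2]
    exact hH.2 w

@[simp]
lemma colorClass_adj {k : ℕ} {c : Sym2 V → Fin k} {i : Fin k} {a b : V} :
    (colorClass G c i).Adj a b ↔ G.Adj a b ∧ c s(a, b) = i :=
  Iff.rfl

lemma sum_ncard_neighborSet_colorClass [Finite V] {k : ℕ} (c : Sym2 V → Fin k) (w : V) :
    ∑ i, ((colorClass G c i).neighborSet w).ncard = (G.neighborSet w).ncard := by
  have hunion : G.neighborSet w = ⋃ i, (colorClass G c i).neighborSet w := by
    ext x
    simp
  have hdisj : Pairwise fun i j ↦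
      Disjoint ((colorClass G c i).neighborSet w) ((colorClass G c j).neighborSet w) := by
    intro i j hij
    refine Set.disjoint_left.2 fun x hi hj ↦ hij ?_
    simp only [mem_neighborSet, colorClass_adj] at hi hj
    exact hi.2.symm.trans hj.2
  rw [hunion, Set.ncard_iUnion_of_finite (fun _ ↦ Set.toFinite _) hdisj,
    finsum_eq_sum_of_fintype]

section Recolour

variable [DecidableEq V] {k : ℕ} (c : Sym2 V → Fin k) {i j : Fin k}

lemma colorClass_update_of_ne (hij : i ≠ j) (u v : V) :
    colorClass G (Function.update c s(u, v) j) i = colorClass (G.deleteEdges {s(u, v)}) c i := by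
  ext a b
  by_cases h : s(a, b) = s(u, v) <;> simp [h, hij.symm]

lemma colorClass_update_self (huv : G.Adj u v) :
    colorClass G (Function.update c s(u, v) j) j
      = colorClass (G.deleteEdges {s(u, v)}) c j ⊔ edge u v := by
  ext a b
  by_cases h : s(a, b) = s(u, v)
  · have hab : G.Adj a b := by rwa [← mem_edgeSet, h]
    simp [h, adj_edge, hab, hab.ne]
  · simp [h, adj_edge, Ne.symm h]

end Recolour

def IsLFMColoring (G : SimpleGraph V) {k : ℕ} (c : Sym2 V → Fin (k + 1)) : Prop :=
  IsMatchingGraph (colorClass G c 0) ∧ ∀ i : Fin (k + 1), i ≠ 0 → IsLinearForest (colorClass G c i)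

namespace IsLFMColoring

variable [DecidableEq V] {k : ℕ} {c : Sym2 V → Fin (k + 1)}

lemma update_of_ne_zero (hc : IsLFMColoring (G.deleteEdges {s(u, v)}) c) (huv : G.Adj u v)
    {j : Fin (k + 1)} (hj : j ≠ 0)
    (hu : ((colorClass (G.deleteEdges {s(u, v)}) c j).neighborSet u).ncard ≤ 1)
    (hv : (colorClass (G.deleteEdges {s(u, v)}) c j).neighborSet v = ∅) :
    IsLFMColoring G (Function.update c s(u, v) j) := by
  refine ⟨?_, fun i hi ↦ ?_⟩
  · rw [colorClass_update_of_ne c hj.symm]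
    exact hc.1
  · obtain rfl | hij := eq_or_ne i j
    · rw [colorClass_update_self c huv]
      exact (hc.2 i hi).sup_edge huv.ne hu hv
    · rw [colorClass_update_of_ne c hij]
      exact hc.2 i hi

lemma update_zero (hc : IsLFMColoring (G.deleteEdges {s(u, v)}) c) (huv : G.Adj u v)
    (hu : (colorClass (G.deleteEdges {s(u, v)}) c 0).neighborSet u = ∅)
    (hv : (colorClass (G.deleteEdges {s(u, v)}) c 0).neighborSet v = ∅) :
    IsLFMColoring G (Function.update c s(u, v) 0) := by
  refine ⟨?_, fun i hi ↦ ?_⟩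
  · rw [colorClass_update_self c huv]
    exact hc.1.sup_edge hu hv
  · rw [colorClass_update_of_ne c hi]
    exact hc.2 i hi

end IsLFMColoring

end

theorem reduce_edge_general {V : Type*} [Fintype V] (G : SimpleGraph V)
    [DecidableRel G.Adj] (u v : V) (huv : G.Adj u v)
    (hdeg : G.degree u + G.degree v ≤ 10)
    (h : HasPartitionLFM (G.deleteEdges {s(u, v)}) 4) :
    HasPartitionLFM G 4 := by
  classical
  obtain ⟨c, hc⟩ := h
  replace hc : IsLFMColoring (G.deleteEdges {s(u, v)}) c := hc
  have hswap : G.deleteEdges {s(v, u)} = G.deleteEdges {s(u, v)} := by rw [Sym2.eq_swap]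
  have hc' : IsLFMColoring (G.deleteEdges {s(v, u)}) c := hswap ▸ hc
  set d : Fin 5 → V → ℕ :=
    fun i w ↦ ((colorClass (G.deleteEdges {s(u, v)}) c i).neighborSet w).ncard
  have empty_of_eq_zero {i : Fin 5} {w : V} (h0 : d i w = 0) :
      (colorClass (G.deleteEdges {s(u, v)}) c i).neighborSet w = ∅ :=
    (Set.ncard_eq_zero (Set.toFinite _)).1 h0
  by_cases! hfree : ∃ j ≠ 0, d j u + d j v ≤ 1
  · obtain ⟨j, hj, hle⟩ := hfree
    rcases Nat.eq_zero_or_pos (d j v) with hv | hv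
    · exact ⟨_, hc.update_of_ne_zero huv hj ((Nat.le_add_right _ _).trans hle)
        (empty_of_eq_zero hv)⟩
    · refine ⟨_, hc'.update_of_ne_zero huv.symm hj ?_ ?_⟩ <;> rw [hswap]
      exacts [(Nat.le_add_left _ _).trans hle, empty_of_eq_zero (by omega)]
  · have hdu : ∑ i, d i u + 1 = G.degree u := by
      rw [sum_ncard_neighborSet_colorClass, ncard_neighborSet_deleteEdges_add_one huv]
    have hdv : ∑ i, d i v + 1 = G.degree v := by
      rw [sum_ncard_neighborSet_colorClass, ← hswap,
        ncard_neighborSet_deleteEdges_add_one huv.symm]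
    rw [Fin.sum_univ_five] at hdu hdv
    have := hfree 1 (by decide)
    have := hfree 2 (by decide)
    have := hfree 3 (by decide)
    have := hfree 4 (by decide)
    exact ⟨_, hc.update_zero huv (empty_of_eq_zero (by omega)) (empty_of_eq_zero (by omega))⟩

/-- Let `uv` be an edge of a simple graph `G` with `d(u) + d(v) ≤ 10`.
If the edges of `G - uv` can be partitioned into four linear forests and a matching,
then so can the edges of `G`. -/
theorem reduce_edge {V : Type*} [Fintype V] [DecidableEq V] (G : SimpleGraph V)
    [DecidableRel G.Adj] (u v : V) (huv : G.Adj u v)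
    (hdeg : G.degree u + G.degree v ≤ 10)
    (h : HasPartitionLFM (G.deleteEdges {s(u, v)}) 4) :
    HasPartitionLFM G 4 :=
  reduce_edge_general G u v huv hdeg h
end

section
/- Let f be a face of length ℓ(f) ≥ 6 in a plane graph in which no two vertices of degree at most 3 are adjacent. Suppose f sends charge as follows: for each segment (x,y,z) of the facial walk, f sends 2/3 to y if d(x)=d(z)=3, and 1/2 to y if d(x)=2 or d(z)=2. Then the total charge sent by f is at most ℓ(f)/3. -/
/-- Let `f` be a face of length `n = ℓ(f) ≥ 6` of a plane graph, with facial
walk `w : ZMod n → V` (consecutive vertices of the walk are adjacent), in which no two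
vertices of degree at most `3` are adjacent (in particular not consecutive on the walk).
If `f` sends, for each segment `(w(i-1), w(i), w(i+1))` of the facial walk, charge `2/3`
to `w(i)` when `d(w(i-1)) = d(w(i+1)) = 3`, and charge `1/2` to `w(i)` when
`d(w(i-1)) = 2` or `d(w(i+1)) = 2`, then the total charge sent by `f` is at most `n/3`. -/
theorem face_sends_at_most_third (n : ℕ) (hn : 6 ≤ n) {V : Type*} (w : ZMod n → V)
    (d : V → ℕ)
    (hadj : ∀ i : ZMod n, ¬(d (w i) ≤ 3 ∧ d (w (i + 1)) ≤ 3)) :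
    haveI : NeZero n := ⟨by omega⟩
    ∑ i : ZMod n,
        (if d (w (i - 1)) = 3 ∧ d (w (i + 1)) = 3 then (2 / 3 : ℚ)
         else if d (w (i - 1)) = 2 ∨ d (w (i + 1)) = 2 then 1 / 2 else 0) ≤ (n : ℚ) / 3 := by
  haveI : NeZero n := ⟨by omega⟩
  -- g i : charge that edge (i, i+1) forwards to its right endpoint i+1
  set g : ZMod n → ℚ := fun i =>
    if d (w i) ≤ 3 then 1/3 else if d (w (i + 1)) ≤ 3 then 0 else 1/6 with hg
  have key : ∀ i : ZMod n,
      (if d (w (i - 1)) = 3 ∧ d (w (i + 1)) = 3 then (2 / 3 : ℚ)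
       else if d (w (i - 1)) = 2 ∨ d (w (i + 1)) = 2 then 1 / 2 else 0)
        ≤ g (i - 1) + (1/3 - g i) := by
    intro i
    have h1 := hadj (i - 1)
    rw [sub_add_cancel] at h1
    have h2 := hadj i
    rw [not_and_or, not_le] at h1 h2
    simp only [hg, sub_add_cancel]
    split_ifs
    all_goals first | omega | norm_num
  calc ∑ i : ZMod n,
        (if d (w (i - 1)) = 3 ∧ d (w (i + 1)) = 3 then (2 / 3 : ℚ)
         else if d (w (i - 1)) = 2 ∨ d (w (i + 1)) = 2 then 1 / 2 else 0)
      ≤ ∑ i : ZMod n, (g (i - 1) + (1/3 - g i)) :=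
        Finset.sum_le_sum fun i _ => key i
    _ = (n : ℚ) / 3 := by
      have hshift : ∑ i : ZMod n, g (i - 1) = ∑ i : ZMod n, g i :=
        Fintype.sum_equiv (Equiv.subRight (1 : ZMod n)) _ _ (fun i => rfl)
      rw [Finset.sum_add_distrib, hshift, Finset.sum_sub_distrib]
      simp [Finset.sum_const, ZMod.card, mul_comm]
      ring
end

section
/- Let G be a simple graph in which some vertex v has two neighbours x and y of degree 2 that share a common neighbour a ≠ v, with x adjacent only to v and a, and y adjacent only to v and a, and av ∉ E(G). Let G' = (G - x) + av. If G' admits an edge-colouring with colours {0,...,4} where colour 0 is a matching and colours 1–4 are linear forests, then so does G. -/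
/-!
In each colour class the new colouring turns the triangle `a y v` of `G'` into the 4-cycle
`a x v y` of `G`: `xv` takes the colour of `yv`, while `xa` and `yv` take the colour of `av`.
Every vertex then has at most as many neighbours of a given colour as some vertex of `G'`.
For cycles, delete `x` and `y`: what remains is a forest `K` common to both colour classes, and
`x`, `y` are re-attached to it as pendant vertices, except that one of them may subdivide a new
path `a - v`. That happens only when `av` has the colour in question, so `a` and `v` lie in
different trees of `K`; both of them subdividing would need `ay`, `yv`, `av` of that colour,
a monochromatic triangle in `G'`.
-/

namespace SimpleGraph

variable {V W : Type*}

theorem Reachable.map_of_eq_or_adj {G : SimpleGraph V} {K : SimpleGraph W} (f : V → W)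
    (hf : ∀ ⦃u w⦄, G.Adj u w → f u = f w ∨ K.Adj (f u) (f w)) {u w : V}
    (h : G.Reachable u w) : K.Reachable (f u) (f w) := by
  rw [reachable_iff_reflTransGen] at h ⊢
  refine Relation.ReflTransGen.lift' f (fun u w huw => ?_) u w h
  change Relation.ReflTransGen K.Adj (f u) (f w)
  rcases hf huw with heq | hadj
  · exact heq ▸ .refl
  · exact .single hadj

theorem Reachable.eq_of_forall_not_adj {G : SimpleGraph V} {x u : V} (hx : ∀ w, ¬G.Adj x w)
    (h : G.Reachable x u) : x = u := by
  obtain ⟨p⟩ := h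
  cases p with
  | nil => rfl
  | cons hadj _ => exact absurd hadj (hx _)

variable {G H H' : SimpleGraph V} {a v x y : V}

theorem IsAcyclic.sup_edge_of_forall_not_adj (hG : G.IsAcyclic) (hx : ∀ w, ¬G.Adj x w) (u : V) :
    (G ⊔ edge x u).IsAcyclic :=
  isAcyclic_sup_fromEdgeSet_iff.2 ⟨hG, fun h => .inl (h.eq_of_forall_not_adj hx)⟩

theorem IsAcyclic.sup_edge_sup_edge_of_forall_not_adj (hG : G.IsAcyclic)
    (hx : ∀ w, ¬G.Adj x w) (hav : ¬G.Reachable a v) : (G ⊔ edge x a ⊔ edge x v).IsAcyclic := by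
  classical
  refine isAcyclic_sup_fromEdgeSet_iff.2 ⟨hG.sup_edge_of_forall_not_adj hx a, fun h => ?_⟩
  rcases eq_or_ne x v with hxv | hxv
  · exact .inl hxv
  -- contracting the pendant edge `xa` turns a path from `x` to `v` into one from `a` to `v`
  refine absurd ?_ hav
  simpa [hxv.symm] using h.map_of_eq_or_adj (K := G) (Function.update id x a) fun u w huw => by
    rcases huw with huw | huw
    · have hu : u ≠ x := fun h => hx w (h ▸ huw)
      have hw : w ≠ x := fun h => hx u (h ▸ huw.symm)
      exact .inr (by simpa [hu, hw] using huw)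
    · rw [edge_adj] at huw
      rcases huw.1 with ⟨rfl, rfl⟩ | ⟨rfl, rfl⟩ <;> simp [Function.update_apply]

/-- `H` arises from `H'` by replacing the triangle `a y v` with the 4-cycle `a x v y`, where the
new edge `xv` is present when `yv` was, and `xa`, `yv` are present when `av` was. -/
structure IsRerouting (H H' : SimpleGraph V) (a v x y : V) : Prop where
  ne_xy : x ≠ y
  ne_xa : x ≠ a
  ne_xv : x ≠ v
  ne_ya : y ≠ a
  ne_yv : y ≠ v
  ne_av : a ≠ v
  adj_x : ∀ ⦃w⦄, H.Adj x w → w = v ∧ H'.Adj y v ∨ w = a ∧ H'.Adj a v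
  adj_y : ∀ ⦃w⦄, H.Adj y w → w = v ∧ H'.Adj a v ∨ w = a ∧ H'.Adj a y
  adj_of_ne : ∀ ⦃u w⦄, u ≠ x → u ≠ y → w ≠ x → w ≠ y → H.Adj u w → H'.Adj u w
  not_adj_av : ¬H.Adj a v

namespace IsRerouting

theorem deleteIncidenceSet_deleteIncidenceSet_le (hR : IsRerouting H H' a v x y) :
    (H.deleteIncidenceSet x).deleteIncidenceSet y ≤ H' := fun u w huw => by
  simp only [deleteIncidenceSet_adj] at huw
  exact hR.adj_of_ne huw.1.2.1 huw.2.1 huw.1.2.2 huw.2.2 huw.1.1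

theorem adj_cases (hR : IsRerouting H H' a v x y) {u w : V} (huw : H.Adj u w) :
    ((H.deleteIncidenceSet x).deleteIncidenceSet y).Adj u w ∨
      (edge x v).Adj u w ∧ H'.Adj y v ∨ (edge x a).Adj u w ∧ H'.Adj a v ∨
      (edge y v).Adj u w ∧ H'.Adj a v ∨ (edge y a).Adj u w ∧ H'.Adj a y := by
  rcases eq_or_ne u x with rfl | hux
  · rcases hR.adj_x huw with ⟨rfl, h⟩ | ⟨rfl, h⟩ <;> simp [edge_adj, h, huw.ne]
  rcases eq_or_ne w x with rfl | hwx
  · rcases hR.adj_x huw.symm with ⟨rfl, h⟩ | ⟨rfl, h⟩ <;> simp [edge_adj, h, huw.ne]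
  rcases eq_or_ne u y with rfl | huy
  · rcases hR.adj_y huw with ⟨rfl, h⟩ | ⟨rfl, h⟩ <;> simp [edge_adj, h, huw.ne]
  rcases eq_or_ne w y with rfl | hwy
  · rcases hR.adj_y huw.symm with ⟨rfl, h⟩ | ⟨rfl, h⟩ <;> simp [edge_adj, h, huw.ne]
  exact .inl (by simp [deleteIncidenceSet_adj, huw, hux, hwx, huy, hwy])

theorem isAcyclic (hR : IsRerouting H H' a v x y) (hH' : H'.IsAcyclic) : H.IsAcyclic := by
  classical
  set K := (H.deleteIncidenceSet x).deleteIncidenceSet y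
  have hK : K.IsAcyclic := hH'.anti hR.deleteIncidenceSet_deleteIncidenceSet_le
  have hKx : ∀ w, ¬K.Adj x w := by simp [K, deleteIncidenceSet_adj]
  have hKy : ∀ w, ¬K.Adj y w := by simp [K, deleteIncidenceSet_adj]
  have hK_av : H'.Adj a v → ¬K.Reachable a v := fun hav hr => by
    have := hH'.anti (sup_le hR.deleteIncidenceSet_deleteIncidenceSet_le
      ((edge_le_iff H').2 (.inr hav)))
    rcases (isAcyclic_sup_fromEdgeSet_iff.1 this).2 hr with h | h
    · exact hR.ne_av h
    · exact hR.not_adj_av (deleteIncidenceSet_le _ _ (deleteIncidenceSet_le _ _ h))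
  obtain ⟨hxy, hxa, hxv, hya, hyv, -⟩ := id hR
  by_cases hC : H'.Adj a v
  · by_cases hA : H'.Adj a y
    · have hB : ¬H'.Adj y v := fun hB =>
        hH'.cliqueFree le_rfl _ (is3Clique_triple_iff.2 ⟨hA, hC, hB⟩)
      refine ((hK.sup_edge_sup_edge_of_forall_not_adj hKy (hK_av hC)).sup_edge_of_forall_not_adj
        (x := x) (by simp [edge_adj, hKx, hxy, hxa, hxv]) a).anti fun u w huw => ?_
      have := hR.adj_cases huw
      simp only [sup_adj]; tauto
    by_cases hB : H'.Adj y v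
    · refine ((hK.sup_edge_sup_edge_of_forall_not_adj hKx (hK_av hC)).sup_edge_of_forall_not_adj
        (x := y) (by simp [edge_adj, hKy, hxy.symm, hya, hyv]) v).anti fun u w huw => ?_
      have := hR.adj_cases huw
      simp only [sup_adj]; tauto
    · refine ((hK.sup_edge_of_forall_not_adj hKx a).sup_edge_of_forall_not_adj
        (x := y) (by simp [edge_adj, hKy, hxy.symm, hya]) v).anti fun u w huw => ?_
      have := hR.adj_cases huw
      simp only [sup_adj]; tauto
  · refine ((hK.sup_edge_of_forall_not_adj hKx v).sup_edge_of_forall_not_adj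
      (x := y) (by simp [edge_adj, hKy, hxy.symm, hyv]) a).anti fun u w huw => ?_
    have := hR.adj_cases huw
    simp only [sup_adj]; tauto

theorem exists_perm_adj (hR : IsRerouting H H' a v x y) (u : V) :
    ∃ (u' : V) (f : Equiv.Perm V), ∀ ⦃w⦄, H.Adj u w → H'.Adj u' (f w) := by
  classical
  obtain ⟨hxy, hxa, hxv, hya, hyv, hav, -⟩ := id hR
  by_cases hux : u = x
  · refine ⟨v, Equiv.swap v y, fun w hw => ?_⟩
    rcases hR.adj_x (hux ▸ hw) with ⟨rfl, h⟩ | ⟨rfl, h⟩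
    · simpa using h.symm
    · simpa [Equiv.swap_apply_of_ne_of_ne hav hya.symm] using h.symm
  by_cases huy : u = y
  · refine ⟨a, Equiv.swap a y, fun w hw => ?_⟩
    rcases hR.adj_y (huy ▸ hw) with ⟨rfl, h⟩ | ⟨rfl, h⟩
    · simpa [Equiv.swap_apply_of_ne_of_ne hav.symm hyv.symm] using h
    · simpa using h
  by_cases hua : u = a
  · subst hua
    refine ⟨u, Equiv.swap x v, fun w hw => ?_⟩
    by_cases hwx : w = x
    · subst hwx
      simpa [hav] using hR.adj_x hw.symm
    by_cases hwy : w = y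
    · subst hwy
      simpa [hav, Equiv.swap_apply_of_ne_of_ne hxy.symm hyv] using hR.adj_y hw.symm
    have hwv : w ≠ v := by rintro rfl; exact hR.not_adj_av hw
    simpa [Equiv.swap_apply_of_ne_of_ne hwx hwv] using hR.adj_of_ne hux huy hwx hwy hw
  by_cases huv : u = v
  · subst huv
    refine ⟨u, (Equiv.swap y a).trans (Equiv.swap x y), fun w hw => ?_⟩
    by_cases hwx : w = x
    · rw [hwx] at hw ⊢
      have h := (hR.adj_x hw.symm).resolve_right fun h => hua h.1
      simpa [Equiv.swap_apply_of_ne_of_ne hxy hxa] using h.2.symm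
    by_cases hwy : w = y
    · rw [hwy] at hw ⊢
      have h := (hR.adj_y hw.symm).resolve_right fun h => hua h.1
      simpa [Equiv.swap_apply_of_ne_of_ne hxa.symm hya.symm] using h.2.symm
    have hwa : w ≠ a := by rintro rfl; exact hR.not_adj_av hw.symm
    simpa [Equiv.swap_apply_of_ne_of_ne hwy hwa, Equiv.swap_apply_of_ne_of_ne hwx hwy]
      using hR.adj_of_ne hux huy hwx hwy hw
  refine ⟨u, Equiv.refl V, fun w hw => ?_⟩
  have hwx : w ≠ x := by rintro rfl; simpa [hua, huv] using hR.adj_x hw.symm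
  have hwy : w ≠ y := by rintro rfl; simpa [hua, huv] using hR.adj_y hw.symm
  exact hR.adj_of_ne hux huy hwx hwy hw

theorem ncard_neighborSet_le [Finite V] (hR : IsRerouting H H' a v x y) {d : ℕ}
    (hd : ∀ u, (H'.neighborSet u).ncard ≤ d) (u : V) : (H.neighborSet u).ncard ≤ d := by
  obtain ⟨u', f, hf⟩ := hR.exists_perm_adj u
  exact (Set.ncard_le_ncard_of_injOn f hf f.injective.injOn (Set.toFinite _)).trans (hd u')

end IsRerouting

end SimpleGraph

section Recolouring

open SimpleGraph

variable {V : Type*} [DecidableEq V] {κ : Type*}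

def rerouteColouring (c' : Sym2 V → κ) (a v x y : V) : Sym2 V → κ := fun e =>
  if e = s(x, a) then c' s(a, v) else if e = s(x, v) then c' s(y, v)
  else if e = s(y, v) then c' s(a, v) else c' e

section

variable (c' : Sym2 V → κ) {a v x y : V}

theorem rerouteColouring_xa : rerouteColouring c' a v x y s(x, a) = c' s(a, v) := by
  simp [rerouteColouring]

theorem rerouteColouring_xv (hav : a ≠ v) :
    rerouteColouring c' a v x y s(x, v) = c' s(y, v) := by
  rw [rerouteColouring, if_neg (by rwa [Sym2.congr_right, eq_comm]), if_pos rfl]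

theorem rerouteColouring_yv (hxy : x ≠ y) (hxv : x ≠ v) :
    rerouteColouring c' a v x y s(y, v) = c' s(a, v) := by
  have hxa : s(y, v) ≠ s(x, a) := by simp [hxy.symm, hxv.symm]
  rw [rerouteColouring, if_neg hxa, if_neg (by rwa [Sym2.congr_left, eq_comm]), if_pos rfl]

theorem rerouteColouring_of_notMem {e : Sym2 V} (hxe : x ∉ e) (hyv : e ≠ s(y, v)) :
    rerouteColouring c' a v x y e = c' e := by
  have hxa : e ≠ s(x, a) := by rintro rfl; simp at hxe
  have hxv : e ≠ s(x, v) := by rintro rfl; simp at hxe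
  simp [rerouteColouring, hxa, hxv, hyv]

end

theorem isRerouting_colorClass {G : SimpleGraph V} {a v x y : V} (hxy : x ≠ y) (hav : a ≠ v)
    (hx : G.neighborSet x = {v, a}) (hy : G.neighborSet y = {v, a}) (hna : ¬G.Adj a v) {k : ℕ}
    (c' : Sym2 V → Fin k) (i : Fin k) :
    (colorClass G (rerouteColouring c' a v x y) i).IsRerouting
      (colorClass (fromEdgeSet ((G.edgeSet \ {e | x ∈ e}) ∪ {s(a, v)})) c' i) a v x y := by
  have hGx : ∀ {w}, G.Adj x w ↔ w = v ∨ w = a := by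
    intro w; rw [← mem_neighborSet, hx]; rfl
  have hGy : ∀ {w}, G.Adj y w ↔ w = v ∨ w = a := by
    intro w; rw [← mem_neighborSet, hy]; rfl
  have hxv : x ≠ v := (hGx.2 (.inl rfl)).ne
  have hxa : x ≠ a := (hGx.2 (.inr rfl)).ne
  have hyv : y ≠ v := (hGy.2 (.inl rfl)).ne
  have hya : y ≠ a := (hGy.2 (.inr rfl)).ne
  set G' := fromEdgeSet ((G.edgeSet \ {e | x ∈ e}) ∪ {s(a, v)})
  have hG' : ∀ {u w}, G.Adj u w → u ≠ x → w ≠ x → G'.Adj u w := by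
    intro u w huw hux hwx
    simp [G', fromEdgeSet_adj, huw, huw.ne, hux.symm, hwx.symm]
  have hG'av : G'.Adj a v := by simp [G', fromEdgeSet_adj, hav]
  refine ⟨hxy, hxa, hxv, hya, hyv, hav, ?_, ?_, ?_, ?_⟩
  · rintro w ⟨hw, hcol⟩
    rcases hGx.1 hw with rfl | rfl
    · exact .inl ⟨rfl, hG' (hGy.2 (.inl rfl)) hxy.symm hxv.symm,
        (rerouteColouring_xv c' hav).symm.trans hcol⟩
    · exact .inr ⟨rfl, hG'av, (rerouteColouring_xa c').symm.trans hcol⟩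
  · rintro w ⟨hw, hcol⟩
    rcases hGy.1 hw with rfl | rfl
    · exact .inl ⟨rfl, hG'av, (rerouteColouring_yv c' hxy hxv).symm.trans hcol⟩
    · refine .inr ⟨rfl, hG' (hGy.2 (.inr rfl)).symm hxa.symm hxy.symm, ?_⟩
      rwa [rerouteColouring_of_notMem c' (by simp [hxy, hxa]) (by rwa [Ne, Sym2.congr_right]),
        Sym2.eq_swap] at hcol
  · rintro u w hux huy hwx hwy ⟨huw, hcol⟩
    refine ⟨hG' huw hux hwx, ?_⟩
    rwa [rerouteColouring_of_notMem c' (by simp [hux.symm, hwx.symm]) (by simp [huy, hwy])]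
      at hcol
  · exact fun h => hna h.1

end Recolouring

/-- Case 1 of the reduction of configuration C3: Let `G` be a simple
graph in which a vertex `v` has two degree-2 neighbours `x` and `y` sharing a common
neighbour `a ≠ v` (so `x` is adjacent exactly to `v` and `a`, and `y` is adjacent
exactly to `v` and `a`), and `av ∉ E(G)`.  Let `G' = (G - x) + av`.  If `G'` admits a
partition of its edges into four linear forests and a matching (an edge-colouring with
colours {0,…,4} where colour 0 is a matching and colours 1–4 are linear forests), then
so does `G`. -/
theorem reduce_config_C3_case1 {V : Type*} [Fintype V] [DecidableEq V]
    (G : SimpleGraph V) (v x y a : V)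
    (hxy : x ≠ y) (hav : a ≠ v)
    (hx : G.neighborSet x = {v, a}) (hy : G.neighborSet y = {v, a})
    (hna : ¬ G.Adj a v)
    (h : HasPartitionLFM
      (SimpleGraph.fromEdgeSet ((G.edgeSet \ {e : Sym2 V | x ∈ e}) ∪ {s(a, v)})) 4) :
    HasPartitionLFM G 4 := by
  obtain ⟨c', hmatching, hforest⟩ := h
  have hR := isRerouting_colorClass hxy hav hx hy hna c'
  exact ⟨rerouteColouring c' a v x y, (hR 0).ncard_neighborSet_le hmatching,
    fun i hi => ⟨(hR i).isAcyclic (hforest i hi).1, (hR i).ncard_neighborSet_le (hforest i hi).2⟩⟩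
end
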